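/- Let ω : E_k^t → E_k be arbitrary, let h_1, ..., h_t : E_k^n → E_k be monotone, and let g : E_k^{n+1} → E_k be monotone. Define f(x) = g(ω(h_1(x), ..., h_t(x)), x). Then d(f) ≤ d(ω). -/

import Mathlib

/-!
Write `H x = (h₁ x, …, h_t x)`, a monotone map. Since `g` is monotone, `f` can decrease at a step
`x < y` of a chain only if `ω (H y) < ω (H x)`. The image of the chain under `H` is weakly
increasing; deleting its repetitions gives a chain along which `ω` decreases at least as often.
-/

/-- A chain in `E_k^n`: pairwise distinct tuples increasing coordinatewise,
    i.e. strictly increasing in the coordinatewise (product) order. -/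
def IsChainE {n k : ℕ} (C : List (Fin n → Fin k)) : Prop :=
  C.Chain' (· < ·)

/-- The decrease `d_C(f)` of `f` over a chain `C`: number of consecutive
    pairs on which `f` strictly decreases. -/
def decC {n k : ℕ} (f : (Fin n → Fin k) → Fin k) (C : List (Fin n → Fin k)) : ℕ :=
  (C.zip C.tail).countP (fun p => decide (f p.2 < f p.1))

/-- The decrease `d(f)` of `f`: maximum of `d_C(f)` over all chains `C`. -/
noncomputable def dF {n k : ℕ} (f : (Fin n → Fin k) → Fin k) : ℕ :=
  sSup {m : ℕ | ∃ C : List (Fin n → Fin k), IsChainE C ∧ decC f C = m}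

lemma decC_cons_cons {n k : ℕ} (f : (Fin n → Fin k) → Fin k) (x y : Fin n → Fin k)
    (C : List (Fin n → Fin k)) :
    decC f (x :: y :: C) = (if f y < f x then 1 else 0) + decC f (y :: C) := by
  simp only [decC, List.tail_cons, List.zip_cons_cons, List.countP_cons, decide_eq_true_eq]
  omega

lemma decC_map {n m k : ℕ} (ω : (Fin m → Fin k) → Fin k) (H : (Fin n → Fin k) → (Fin m → Fin k))
    (C : List (Fin n → Fin k)) : decC ω (C.map H) = decC (ω ∘ H) C := by
  simp [decC, ← List.map_tail, List.zip_map, List.countP_map, Function.comp_def]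

lemma decC_le_decC_of_lt_imp_lt {n k : ℕ} {f f' : (Fin n → Fin k) → Fin k}
    (hff' : ∀ x y, x ≤ y → f y < f x → f' y < f' x) :
    ∀ C : List (Fin n → Fin k), C.IsChain (· ≤ ·) → decC f C ≤ decC f' C
  | [], _ | [_], _ => le_rfl
  | x :: y :: C, hC => by
    rw [List.isChain_cons_cons] at hC
    have ih := decC_le_decC_of_lt_imp_lt hff' (y :: C) hC.2
    rw [decC_cons_cons, decC_cons_cons]
    have := hff' x y hC.1
    split_ifs <;> grind

lemma exists_isChainE_decC_le {t k : ℕ} (ω : (Fin t → Fin k) → Fin k) :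
    ∀ L : List (Fin t → Fin k), L.IsChain (· ≤ ·) →
      ∃ D, IsChainE D ∧ D.head? = L.head? ∧ decC ω L ≤ decC ω D
  | [], _ => ⟨[], List.isChain_nil, rfl, le_rfl⟩
  | [x], _ => ⟨[x], List.isChain_singleton x, rfl, le_rfl⟩
  | x :: y :: L, hL => by
    rw [List.isChain_cons_cons] at hL
    obtain ⟨D, hD, hhead, hdec⟩ := exists_isChainE_decC_le ω (y :: L) hL.2
    obtain ⟨D, rfl⟩ := List.head?_eq_some_iff.mp hhead
    rcases hL.1.eq_or_lt with hxy | hxy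
    · subst hxy
      exact ⟨x :: D, hD, rfl, by simpa [decC_cons_cons] using hdec⟩
    · refine ⟨x :: y :: D, List.isChain_cons_cons.mpr ⟨hxy, hD⟩, rfl, ?_⟩
      rw [decC_cons_cons, decC_cons_cons]
      omega

lemma decC_le_dF {n k : ℕ} (f : (Fin n → Fin k) → Fin k) {C : List (Fin n → Fin k)}
    (hC : IsChainE C) : decC f C ≤ dF f := by
  refine le_csSup ⟨Fintype.card (Fin n → Fin k), ?_⟩ ⟨C, hC, rfl⟩
  rintro _ ⟨D, hD, rfl⟩
  calc decC f D ≤ (D.zip D.tail).length := List.countP_le_length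
    _ ≤ D.length := by simp [List.length_zip]
    _ ≤ _ := List.Nodup.length_le_card (hD.pairwise.imp ne_of_lt)

lemma dF_le_of_forall_decC_le {n m k : ℕ} {f : (Fin n → Fin k) → Fin k}
    {ω : (Fin m → Fin k) → Fin k} (h : ∀ C, IsChainE C → decC f C ≤ dF ω) : dF f ≤ dF ω :=
  csSup_le ⟨0, [], List.isChain_nil, rfl⟩ fun _ ⟨C, hC, hdec⟩ => hdec ▸ h C hC

lemma dF_le_dF_of_monotone {n m k : ℕ} {f : (Fin n → Fin k) → Fin k}
    {ω : (Fin m → Fin k) → Fin k} {H : (Fin n → Fin k) → (Fin m → Fin k)} (hH : Monotone H)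
    (hfω : ∀ x y, x ≤ y → f y < f x → ω (H y) < ω (H x)) : dF f ≤ dF ω := by
  refine dF_le_of_forall_decC_le fun C hC => ?_
  have hCle : C.IsChain (· ≤ ·) := hC.imp fun _ _ => le_of_lt
  obtain ⟨D, hD, -, hdec⟩ := exists_isChainE_decC_le ω (C.map H)
    (List.isChain_map_of_isChain H (fun _ _ hxy => hH hxy) hCle)
  calc decC f C ≤ decC (ω ∘ H) C := decC_le_decC_of_lt_imp_lt hfω C hCle
    _ = decC ω (C.map H) := (decC_map ω H C).symm
    _ ≤ decC ω D := hdec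
    _ ≤ dF ω := decC_le_dF ω hD

/-- If `h₁, ..., h_t` and `g` are monotone, then
    `f(x) = g(ω(h₁(x),...,h_t(x)), x)` satisfies `d(f) ≤ d(ω)`. -/
theorem stmt7 {n t k : ℕ} (ω : (Fin t → Fin k) → Fin k)
    (h : Fin t → (Fin n → Fin k) → Fin k) (hh : ∀ i, Monotone (h i))
    (g : (Fin (n + 1) → Fin k) → Fin k) (hg : Monotone g) :
    dF (fun x => g (Fin.cons (ω (fun i => h i x)) x)) ≤ dF ω := by
  refine dF_le_dF_of_monotone (H := fun x i => h i x) (fun x y hxy i => hh i hxy) ?_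
  intro x y hxy hf
  by_contra hω
  exact hf.not_ge (hg (Fin.cons_le_cons.mpr ⟨not_lt.mp hω, hxy⟩))
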